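/- Let p be an odd prime, γ ≥ 1, 0 ≤ ρ ≤ γ, and let G = ⟨a, b | [a,b]^{p^γ} = [[a,b],a] = [[a,b],b] = 1, a^{p^γ} = [a,b]^{p^ρ}, b^{p^γ} = 1⟩ (the group G_{(γ,γ,γ;ρ,γ)}). For each 1 ≤ δ ≤ γ, the abelian quotient ⟨a^{p^δ}, b^{p^δ}, [a,b]⟩/⟨[a,b]^{p^{δ−1}}⟩ is isomorphic to C_{p^{γ−ρ−1}} × C_{p^{γ−δ}} × C_{p^ρ} if ρ < δ < γ−ρ, and to C_{p^{γ−δ}} × C_{p^{γ−δ}} × C_{p^{δ−1}} otherwise. -/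

import Mathlib

set_option autoImplicit false

open scoped commutatorElement

noncomputable section

/-- The subgroup `⟨a^{p^δ}, b^{p^δ}, [a,b]⟩`. -/
def Zsub {G : Type} [Group G] (a b : G) (p δ : ℕ) : Subgroup G :=
  Subgroup.closure {a ^ p ^ δ, b ^ p ^ δ, ⁅a, b⁆}

/-- The subgroup `⟨[a,b]^{p^k}⟩`. -/
def Ksub {G : Type} [Group G] (a b : G) (p k : ℕ) : Subgroup G :=
  Subgroup.closure {⁅a, b⁆ ^ p ^ k}

/-- The cyclic group of order `m`. -/
abbrev Cyc (m : ℕ) : Type := Multiplicative (ZMod m)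

/-!
The commutator `c = [a, b]` is central, so `[a^m, b^n] = c^{mn}`, every commutator lies in `⟨c⟩`,
and `Z = ⟨a^{p^δ}, b^{p^δ}, c⟩` is normal with `G/Z` abelian and generated by two elements of order
dividing `p^δ`. Hence `|Z| ≥ p^{3γ-2δ}`, and since `c^{p^{δ-1}}` has order at most `p^{γ-δ+1}`
the quotient `Q = Z/⟨c^{p^{δ-1}}⟩` has order at least `p^{2γ-δ-1}`.

On the other hand `Q` is abelian (`[a^{p^δ}, b^{p^δ}] = c^{p^{2δ}}` dies in `Q`) and generated by
`A, B, C` with `A^{p^{γ-δ}} = C^{p^ρ}` and `B^{p^{γ-δ}} = C^{p^{δ-1}} = 1`. Replacing `C` by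
`C A^{-p^{γ-δ-ρ}}` when `ρ < δ < γ - ρ`, or `A` by `A C^{-p^{ρ-γ+δ}}` when `γ - δ ≤ ρ` (when
`δ ≤ ρ`, already `A^{p^{γ-δ}} = 1`), gives generators whose orders divide the claimed cyclic
factors. The product of these bounds equals the lower bound for `|Q|`, so the evident surjection
from the product of cyclic groups onto `Q` is an isomorphism.
-/

open Subgroup

theorem pow_pow_pow_of_add_eq {M : Type*} [Monoid M] (g : M) {p i k j : ℕ} (h : i + k = j) :
    (g ^ p ^ i) ^ p ^ k = g ^ p ^ j := by
  rw [← pow_mul, ← pow_add, h]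

section ClassTwo

variable {G : Type*} [Group G] {x y : G}

theorem commutatorElement_pow_left (hx : Commute ⁅x, y⁆ x) (m : ℕ) :
    ⁅x ^ m, y⁆ = ⁅x, y⁆ ^ m := by
  induction m with
  | zero => simp
  | succ m ih =>
    have hstep : ⁅x ^ (m + 1), y⁆ = x * ⁅x ^ m, y⁆ * x⁻¹ * ⁅x, y⁆ := by
      simp only [commutatorElement_def, pow_succ']
      group
    rw [hstep, ih, ← (hx.pow_left m).eq, mul_inv_cancel_right, pow_succ]

theorem commutatorElement_pow_right (hy : Commute ⁅x, y⁆ y) (n : ℕ) :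
    ⁅x, y ^ n⁆ = ⁅x, y⁆ ^ n := by
  have hy' : Commute ⁅y, x⁆ y := by rw [← commutatorElement_inv]; exact hy.inv_left
  rw [← commutatorElement_inv, commutatorElement_pow_left hy', ← commutatorElement_inv, inv_pow,
    inv_inv]

theorem commutatorElement_pow_pow (hx : Commute ⁅x, y⁆ x) (hy : Commute ⁅x, y⁆ y) (m n : ℕ) :
    ⁅x ^ m, y ^ n⁆ = ⁅x, y⁆ ^ (m * n) := by
  have hx' : Commute ⁅x, y ^ n⁆ x := by rw [commutatorElement_pow_right hy]; exact hx.pow_left n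
  rw [commutatorElement_pow_left hx', commutatorElement_pow_right hy, ← pow_mul, mul_comm]

end ClassTwo

section Generation

variable {G H : Type*} [Group G] [Group H]

theorem closure_image_eq_top {f : G →* H} (hf : Function.Surjective f) {s : Set G}
    (hs : closure s = ⊤) : closure (f '' s) = ⊤ := by
  rw [← MonoidHom.map_closure, hs, map_top_of_surjective f hf]

theorem closure_eq_top_of_subset_closure {s t : Set G} (hs : closure s = ⊤)
    (hst : s ⊆ closure t) : closure t = ⊤ :=
  top_le_iff.mp (hs ▸ (closure_le _).mpr hst)

theorem MonoidHom.surjective_of_subset_range {f : G →* H} {s : Set H} (hs : closure s = ⊤)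
    (hsf : s ⊆ f.range) : Function.Surjective f :=
  MonoidHom.range_eq_top.mp (top_le_iff.mp (hs ▸ (closure_le _).mpr hsf))

theorem mem_center_of_closure_eq_top {s : Set G} (hs : closure s = ⊤) {g : G}
    (hg : ∀ x ∈ s, Commute g x) : g ∈ center G := by
  rw [← centralizer_univ, ← coe_top, ← hs, centralizer_closure]
  exact fun x hx => (hg x hx).symm.eq

theorem Subgroup.normal_of_le_center {N : Subgroup G} (h : N ≤ center G) : N.Normal :=
  ⟨fun n hn g => by rwa [mem_center_iff.mp (h hn) g, mul_inv_cancel_right]⟩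

theorem isMulCommutative_of_closure_eq_top {s : Set G} (hs : closure s = ⊤)
    (hcomm : ∀ x ∈ s, ∀ y ∈ s, Commute x y) : IsMulCommutative G := by
  have := isMulCommutative_closure fun x hx y hy => (hcomm x hx y hy).eq
  exact ⟨⟨fun x y => congrArg Subtype.val
    (mul_comm' (⟨x, hs ▸ mem_top x⟩ : closure s) ⟨y, hs ▸ mem_top y⟩)⟩⟩

theorem QuotientGroup.commute_mk_iff {N : Subgroup G} [N.Normal] {x y : G} :
    Commute (x : G ⧸ N) y ↔ ⁅x, y⁆ ∈ N := by
  rw [← commutatorElement_eq_one_iff_commute, ← QuotientGroup.eq_one_iff,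
    ← QuotientGroup.mk'_apply N ⁅x, y⁆, map_commutatorElement]
  rfl

theorem QuotientGroup.isMulCommutative_of_commutatorElement_mem {N : Subgroup G} [N.Normal]
    {s : Set G} (hs : closure s = ⊤) (h : ∀ x ∈ s, ∀ y ∈ s, ⁅x, y⁆ ∈ N) :
    IsMulCommutative (G ⧸ N) := by
  refine isMulCommutative_of_closure_eq_top
    (closure_image_eq_top (QuotientGroup.mk'_surjective N) hs) ?_
  rintro _ ⟨x, hx, rfl⟩ _ ⟨y, hy, rfl⟩
  exact QuotientGroup.commute_mk_iff.mpr (h x hx y hy)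

end Generation

section Abelian

open scoped IsMulCommutative

variable {Q : Type*} [Group Q] [IsMulCommutative Q]

def Cyc.lift {m : ℕ} (g : Q) (hg : g ^ m = 1) : Cyc m →* Q :=
  AddMonoidHom.toMultiplicativeLeft <| ZMod.lift m
    ⟨zmultiplesHom (Additive Q) (Additive.ofMul g), by simp [← ofMul_pow, hg]⟩

@[simp]
theorem Cyc.lift_ofAdd_one {m : ℕ} (g : Q) (hg : g ^ m = 1) :
    Cyc.lift g hg (Multiplicative.ofAdd 1) = g := by
  simp only [Cyc.lift, AddMonoidHom.toMultiplicativeLeft_apply_apply, toAdd_ofAdd]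
  rw [← Int.cast_one, ZMod.lift_coe]
  simp

theorem card_le_of_closure_pair_eq_top {x y : Q} {l m : ℕ} [NeZero l] [NeZero m]
    (hx : x ^ l = 1) (hy : y ^ m = 1) (hgen : closure {x, y} = ⊤) : Nat.card Q ≤ l * m := by
  have hsurj : Function.Surjective ((Cyc.lift x hx).coprod (Cyc.lift y hy)) := by
    refine MonoidHom.surjective_of_subset_range hgen ?_
    rintro _ (rfl | rfl)
    · exact ⟨(Multiplicative.ofAdd 1, 1), by simp⟩
    · exact ⟨(1, Multiplicative.ofAdd 1), by simp⟩
  simpa using Nat.card_le_card_of_surjective _ hsurj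

theorem nonempty_mulEquiv_of_closure_triple_eq_top {x y z : Q} {l m n : ℕ}
    [NeZero l] [NeZero m] [NeZero n] (hx : x ^ l = 1) (hy : y ^ m = 1) (hz : z ^ n = 1)
    (hgen : closure {x, y, z} = ⊤) (hcard : l * (m * n) ≤ Nat.card Q) :
    Nonempty (Q ≃* Cyc l × Cyc m × Cyc n) := by
  set ψ := (Cyc.lift x hx).coprod ((Cyc.lift y hy).coprod (Cyc.lift z hz))
  have hsurj : Function.Surjective ψ := by
    refine MonoidHom.surjective_of_subset_range hgen ?_
    rintro _ (rfl | rfl | rfl)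
    · exact ⟨(Multiplicative.ofAdd 1, 1, 1), by simp [ψ]⟩
    · exact ⟨(1, Multiplicative.ofAdd 1, 1), by simp [ψ]⟩
    · exact ⟨(1, 1, Multiplicative.ofAdd 1), by simp [ψ]⟩
  have hcard' : Nat.card (Cyc l × Cyc m × Cyc n) = Nat.card Q :=
    le_antisymm (by simpa using hcard) (Nat.card_le_card_of_surjective _ hsurj)
  exact ⟨(MulEquiv.ofBijective ψ ((Nat.bijective_iff_surjective_and_card ψ).mpr
    ⟨hsurj, hcard'⟩)).symm⟩

variable {A B C : Q} {p u v ρ : ℕ} [NeZero p]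

theorem nonempty_mulEquiv_of_le_of_le (hA : A ^ p ^ u = C ^ p ^ ρ) (hB : B ^ p ^ u = 1)
    (hC : C ^ p ^ v = 1) (hgen : closure {A, B, C} = ⊤) (hcard : p ^ (2 * u + v) ≤ Nat.card Q)
    (hρu : ρ ≤ u) (hρv : ρ ≤ v) :
    Nonempty (Q ≃* Cyc (p ^ (u + v - ρ)) × Cyc (p ^ u) × Cyc (p ^ ρ)) := by
  have hA' : A ^ p ^ (u + v - ρ) = 1 := by
    rw [← pow_pow_pow_of_add_eq A (i := u) (k := v - ρ) (by omega), hA,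
      pow_pow_pow_of_add_eq C (j := v) (by omega), hC]
  have hx : (C * (A ^ p ^ (u - ρ))⁻¹) ^ p ^ ρ = 1 := by
    rw [mul_pow, inv_pow, pow_pow_pow_of_add_eq A (j := u) (by omega), hA, mul_inv_cancel]
  refine nonempty_mulEquiv_of_closure_triple_eq_top hA' hB hx ?_ ?_
  · refine closure_eq_top_of_subset_closure hgen ?_
    simp only [Set.insert_subset_iff, Set.singleton_subset_iff]
    refine ⟨subset_closure (by simp), subset_closure (by simp), ?_⟩
    rw [← inv_mul_cancel_right C (A ^ p ^ (u - ρ))]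
    exact mul_mem (subset_closure (by simp)) (pow_mem (subset_closure (by simp)) _)
  · rw [← pow_add, ← pow_add]
    exact le_of_eq_of_le (by congr 1; omega) hcard

theorem nonempty_mulEquiv_of_le_or_le (hA : A ^ p ^ u = C ^ p ^ ρ) (hB : B ^ p ^ u = 1)
    (hC : C ^ p ^ v = 1) (hgen : closure {A, B, C} = ⊤) (hcard : p ^ (2 * u + v) ≤ Nat.card Q)
    (h : u ≤ ρ ∨ v ≤ ρ) :
    Nonempty (Q ≃* Cyc (p ^ u) × Cyc (p ^ u) × Cyc (p ^ v)) := by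
  have hcard' : p ^ u * (p ^ u * p ^ v) ≤ Nat.card Q := by
    rwa [← pow_add, ← pow_add, ← add_assoc, ← two_mul]
  rcases h with huρ | hvρ
  · have hx : (A * (C ^ p ^ (ρ - u))⁻¹) ^ p ^ u = 1 := by
      rw [mul_pow, inv_pow, pow_pow_pow_of_add_eq C (j := ρ) (by omega), hA, mul_inv_cancel]
    refine nonempty_mulEquiv_of_closure_triple_eq_top hx hB hC ?_ hcard'
    refine closure_eq_top_of_subset_closure hgen ?_
    simp only [Set.insert_subset_iff, Set.singleton_subset_iff]
    refine ⟨?_, subset_closure (by simp), subset_closure (by simp)⟩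
    rw [← inv_mul_cancel_right A (C ^ p ^ (ρ - u))]
    exact mul_mem (subset_closure (by simp)) (pow_mem (subset_closure (by simp)) _)
  · have hA' : A ^ p ^ u = 1 := by
      rw [hA, ← pow_pow_pow_of_add_eq C (Nat.add_sub_cancel' hvρ), hC, one_pow]
    exact nonempty_mulEquiv_of_closure_triple_eq_top hA' hB hC hgen hcard'

end Abelian

section Presentation

variable {G : Type} [Group G] {a b : G} {p : ℕ}

theorem commutatorElement_mem_center (h2 : ⁅⁅a, b⁆, a⁆ = 1) (h3 : ⁅⁅a, b⁆, b⁆ = 1)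
    (hgen : closure {a, b} = ⊤) : ⁅a, b⁆ ∈ center G := by
  refine mem_center_of_closure_eq_top hgen ?_
  simp only [Set.mem_insert_iff, Set.mem_singleton_iff, forall_eq_or_imp, forall_eq]
  exact ⟨commutatorElement_eq_one_iff_commute.mp h2, commutatorElement_eq_one_iff_commute.mp h3⟩

theorem commutator_le_zpowers (hc : ⁅a, b⁆ ∈ center G) (hgen : closure {a, b} = ⊤) :
    commutator G ≤ zpowers ⁅a, b⁆ := by
  have := Subgroup.normal_of_le_center (zpowers_le.mpr hc)
  refine Subgroup.Normal.quotient_commutative_iff_commutator_le.mp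
    (QuotientGroup.isMulCommutative_of_commutatorElement_mem hgen ?_)
  simp only [Set.mem_insert_iff, Set.mem_singleton_iff, forall_eq_or_imp, forall_eq,
    commutatorElement_self, one_mem, true_and, and_true]
  exact ⟨mem_zpowers _, commutatorElement_inv a b ▸ inv_mem (mem_zpowers _)⟩

theorem commutator_le_Zsub (hc : ⁅a, b⁆ ∈ center G) (hgen : closure {a, b} = ⊤) (δ : ℕ) :
    commutator G ≤ Zsub a b p δ :=
  (commutator_le_zpowers hc hgen).trans (zpowers_le.mpr (subset_closure (by simp)))

theorem Zsub.index_le [NeZero p] (hc : ⁅a, b⁆ ∈ center G) (hgen : closure {a, b} = ⊤) (δ : ℕ) :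
    (Zsub a b p δ).index ≤ p ^ δ * p ^ δ := by
  have hZ := commutator_le_Zsub (p := p) hc hgen δ
  have := Subgroup.Normal.of_commutator_le _ hZ
  have := Subgroup.Normal.quotient_commutative_iff_commutator_le.mpr hZ
  refine card_le_of_closure_pair_eq_top (x := (a : G ⧸ Zsub a b p δ)) (y := b) ?_ ?_ ?_
  · rw [← QuotientGroup.mk_pow, QuotientGroup.eq_one_iff]
    exact subset_closure (by simp)
  · rw [← QuotientGroup.mk_pow, QuotientGroup.eq_one_iff]
    exact subset_closure (by simp)
  · have := closure_image_eq_top (QuotientGroup.mk'_surjective (Zsub a b p δ)) hgen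
    rwa [Set.image_pair] at this

theorem Ksub.card_le [NeZero p] {γ k : ℕ} (h1 : ⁅a, b⁆ ^ p ^ γ = 1) (hk : k ≤ γ) :
    Nat.card (Ksub a b p k) ≤ p ^ (γ - k) := by
  rw [Ksub, ← zpowers_eq_closure, Nat.card_zpowers]
  exact orderOf_le_of_pow_eq_one (NeZero.pos _)
    (by rwa [pow_pow_pow_of_add_eq _ (Nat.add_sub_cancel' hk)])

end Presentation

namespace Zsub

section Generators

variable {G : Type} [Group G] (a b : G) (p δ : ℕ)

def powA : Zsub a b p δ := ⟨a ^ p ^ δ, subset_closure (by simp)⟩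

def powB : Zsub a b p δ := ⟨b ^ p ^ δ, subset_closure (by simp)⟩

def commAB : Zsub a b p δ := ⟨⁅a, b⁆, subset_closure (by simp)⟩

theorem closure_gens_eq_top : closure {powA a b p δ, powB a b p δ, commAB a b p δ} = ⊤ := by
  have h : ({powA a b p δ, powB a b p δ, commAB a b p δ} : Set (Zsub a b p δ)) =
      (↑) ⁻¹' {a ^ p ^ δ, b ^ p ^ δ, ⁅a, b⁆} := by
    ext x
    simp [powA, powB, commAB, Subtype.ext_iff]
  rw [h]
  exact closure_closure_coe_preimage

end Generators

variable {G : Type} [Group G] {a b : G} {p δ : ℕ}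

theorem Ksub_le (k : ℕ) : Ksub a b p k ≤ Zsub a b p δ :=
  (closure_le _).mpr (Set.singleton_subset_iff.mpr (pow_mem (subset_closure (by simp)) _))

theorem commAB_pow_mem (k : ℕ) :
    commAB a b p δ ^ p ^ k ∈ (Ksub a b p k).subgroupOf (Zsub a b p δ) :=
  mem_subgroupOf.mpr (subset_closure rfl)

theorem powA_pow {γ ρ : ℕ} (h4 : a ^ p ^ γ = ⁅a, b⁆ ^ p ^ ρ) (hδ : δ ≤ γ) :
    powA a b p δ ^ p ^ (γ - δ) = commAB a b p δ ^ p ^ ρ :=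
  Subtype.ext (by simpa [powA, commAB, pow_pow_pow_of_add_eq _ (Nat.add_sub_of_le hδ)] using h4)

theorem powB_pow {γ : ℕ} (h5 : b ^ p ^ γ = 1) (hδ : δ ≤ γ) : powB a b p δ ^ p ^ (γ - δ) = 1 :=
  Subtype.ext (by simpa [powB, pow_pow_pow_of_add_eq _ (Nat.add_sub_of_le hδ)] using h5)

theorem commutatorElement_powA_powB_mem (hc : ⁅a, b⁆ ∈ center G) {k : ℕ} (hk : k ≤ 2 * δ) :
    ⁅powA a b p δ, powB a b p δ⁆ ∈ (Ksub a b p k).subgroupOf (Zsub a b p δ) := by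
  rw [mem_subgroupOf]
  change ⁅a ^ p ^ δ, b ^ p ^ δ⁆ ∈ Ksub a b p k
  rw [commutatorElement_pow_pow (mem_center_iff.mp hc a).symm (mem_center_iff.mp hc b).symm,
    ← pow_add, ← pow_pow_pow_of_add_eq _ (Nat.add_sub_of_le (show k ≤ δ + δ by omega))]
  exact pow_mem (subset_closure (Set.mem_singleton _)) _

theorem isMulCommutative_quotient (hc : ⁅a, b⁆ ∈ center G) {k : ℕ} (hk : k ≤ 2 * δ)
    [((Ksub a b p k).subgroupOf (Zsub a b p δ)).Normal] :
    IsMulCommutative (Zsub a b p δ ⧸ (Ksub a b p k).subgroupOf (Zsub a b p δ)) := by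
  have hcen : ∀ x : Zsub a b p δ, ⁅x, commAB a b p δ⁆ = 1 ∧ ⁅commAB a b p δ, x⁆ = 1 := by
    intro x
    have hx : Commute x (commAB a b p δ) := Subtype.ext (mem_center_iff.mp hc x)
    exact ⟨commutatorElement_eq_one_iff_commute.mpr hx,
      commutatorElement_eq_one_iff_commute.mpr hx.symm⟩
  have hAB := commutatorElement_powA_powB_mem (p := p) hc hk
  refine QuotientGroup.isMulCommutative_of_commutatorElement_mem (closure_gens_eq_top a b p δ) ?_
  simp only [Set.mem_insert_iff, Set.mem_singleton_iff]
  rintro x (rfl | rfl | rfl) y (rfl | rfl | rfl) <;>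
    first
    | simp only [commutatorElement_self, hcen, one_mem, hAB]
    | exact commutatorElement_inv (powA a b p δ) _ ▸ inv_mem hAB

theorem card_quotient_ge [NeZero p] {γ : ℕ} (hcard : Nat.card G = p ^ (3 * γ))
    (h1 : ⁅a, b⁆ ^ p ^ γ = 1) (hc : ⁅a, b⁆ ∈ center G) (hgen : closure {a, b} = ⊤)
    (hδ1 : 1 ≤ δ) (hδ2 : δ ≤ γ) [((Ksub a b p (δ - 1)).subgroupOf (Zsub a b p δ)).Normal] :
    p ^ (2 * (γ - δ) + (δ - 1)) ≤
      Nat.card (Zsub a b p δ ⧸ (Ksub a b p (δ - 1)).subgroupOf (Zsub a b p δ)) := by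
  set K := (Ksub a b p (δ - 1)).subgroupOf (Zsub a b p δ)
  have hK : Nat.card K ≤ p ^ (γ - (δ - 1)) := by
    rw [Nat.card_congr (subgroupOfEquivOfLe (Ksub_le _)).toEquiv]
    exact Ksub.card_le h1 (by omega)
  have hG : p ^ (3 * γ) ≤ Nat.card (Zsub a b p δ ⧸ K) * p ^ (γ - (δ - 1)) * (p ^ δ * p ^ δ) := by
    rw [← hcard, ← (Zsub a b p δ).card_mul_index, K.card_eq_card_quotient_mul_card_subgroup]
    gcongr
    exact index_le hc hgen δ
  have hexp : p ^ (3 * γ) = p ^ (2 * (γ - δ) + (δ - 1)) * p ^ (γ - (δ - 1)) * (p ^ δ * p ^ δ) := by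
    rw [← pow_add, ← pow_add, ← pow_add]
    congr 1
    omega
  rw [hexp, mul_assoc, mul_assoc] at hG
  exact Nat.le_of_mul_le_mul_right hG (NeZero.pos _)

end Zsub

/-- For the group `G = G_{(γ,γ,γ;ρ,γ)}`, the quotient
`⟨a^{p^δ}, b^{p^δ}, [a,b]⟩ / ⟨[a,b]^{p^{δ-1}}⟩` is isomorphic to
`C_{p^{γ-ρ-1}} × C_{p^{γ-δ}} × C_{p^ρ}` if `ρ < δ < γ-ρ`, and to
`C_{p^{γ-δ}} × C_{p^{γ-δ}} × C_{p^{δ-1}}` otherwise. -/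
theorem quotient_structure_tau5' {G : Type} [Group G] {p γ ρ : ℕ}
    (hp : p.Prime) (hodd : Odd p) (hγ : 1 ≤ γ) (hρ : ρ ≤ γ)
    (a b : G)
    (h1 : ⁅a, b⁆ ^ p ^ γ = 1)
    (h2 : ⁅⁅a, b⁆, a⁆ = 1)
    (h3 : ⁅⁅a, b⁆, b⁆ = 1)
    (h4 : a ^ p ^ γ = ⁅a, b⁆ ^ p ^ ρ)
    (h5 : b ^ p ^ γ = 1)
    (hgen : Subgroup.closure {a, b} = ⊤)
    (hcard : Nat.card G = p ^ (3 * γ))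
    [∀ k δ : ℕ, ((Ksub a b p k).subgroupOf (Zsub a b p δ)).Normal]
    (δ : ℕ) (hδ1 : 1 ≤ δ) (hδ2 : δ ≤ γ) :
    ((ρ < δ ∧ δ < γ - ρ) →
      Nonempty ((Zsub a b p δ ⧸ (Ksub a b p (δ - 1)).subgroupOf (Zsub a b p δ)) ≃*
        (Cyc (p ^ (γ - ρ - 1)) × Cyc (p ^ (γ - δ)) × Cyc (p ^ ρ)))) ∧
    (¬ (ρ < δ ∧ δ < γ - ρ) →
      Nonempty ((Zsub a b p δ ⧸ (Ksub a b p (δ - 1)).subgroupOf (Zsub a b p δ)) ≃*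
        (Cyc (p ^ (γ - δ)) × Cyc (p ^ (γ - δ)) × Cyc (p ^ (δ - 1))))) := by
  have : NeZero p := ⟨hp.ne_zero⟩
  have hc := commutatorElement_mem_center h2 h3 hgen
  set K := (Ksub a b p (δ - 1)).subgroupOf (Zsub a b p δ)
  have := Zsub.isMulCommutative_quotient (p := p) (δ := δ) hc (show δ - 1 ≤ 2 * δ by omega)
  have hgenQ : closure ({↑(Zsub.powA a b p δ), ↑(Zsub.powB a b p δ), ↑(Zsub.commAB a b p δ)} :
      Set (Zsub a b p δ ⧸ K)) = ⊤ := by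
    have := closure_image_eq_top (QuotientGroup.mk'_surjective K) (Zsub.closure_gens_eq_top a b p δ)
    rwa [Set.image_insert_eq, Set.image_pair] at this
  have hA : (Zsub.powA a b p δ : _ ⧸ K) ^ p ^ (γ - δ) = Zsub.commAB a b p δ ^ p ^ ρ := by
    rw [← QuotientGroup.mk_pow, Zsub.powA_pow h4 hδ2, QuotientGroup.mk_pow]
  have hB : (Zsub.powB a b p δ : _ ⧸ K) ^ p ^ (γ - δ) = 1 := by
    rw [← QuotientGroup.mk_pow, Zsub.powB_pow h5 hδ2, QuotientGroup.mk_one]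
  have hC : (Zsub.commAB a b p δ : _ ⧸ K) ^ p ^ (δ - 1) = 1 := by
    rw [← QuotientGroup.mk_pow, QuotientGroup.eq_one_iff]
    exact Zsub.commAB_pow_mem _
  have hcardQ := Zsub.card_quotient_ge hcard h1 hc hgen hδ1 hδ2
  refine ⟨fun h => ?_, fun h => nonempty_mulEquiv_of_le_or_le hA hB hC hgenQ hcardQ (by omega)⟩
  rw [show γ - ρ - 1 = γ - δ + (δ - 1) - ρ by omega]
  exact nonempty_mulEquiv_of_le_of_le hA hB hC hgenQ hcardQ (by omega) (by omega)
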